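/- In the subtype system for union-intersection types (with raw types R ::= α | S→T, subsidiary types S ::= ⋂R, types T ::= ⋃S), the reflexivity rule T ≤ T and the transitivity rule (T ≤ T' and T' ≤ T'' imply T ≤ T'') are admissible: any judgment T ≤ T' derivable in the system extended by reflexivity and transitivity is derivable in the pure system. -/

import Mathlib

/-! ## Union-intersection types -/

mutual
/-- Raw types `R ::= α | S → T`. -/
inductive RawTy : Type
  | atom : ℕ → RawTy
  | arrow : STy → TTy → RawTy
/-- Subsidiary types: finite formal intersections of raw types
    (the empty intersection is ω). -/
inductive STy : Type
  | inter : List RawTy → STy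
/-- Types: finite formal unions of subsidiary types
    (the empty union is Ʊ). -/
inductive TTy : Type
  | union : List STy → TTy
end

/-- A subsidiary type regarded as a type (a singleton union). -/
def STy.toT (S : STy) : TTy := .union [S]
/-- A raw type regarded as a subsidiary type (a singleton intersection). -/
def RawTy.toS (R : RawTy) : STy := .inter [R]

/-- ω, the empty intersection. -/
def STy.omega : STy := .inter []
/-- Ʊ, the empty union. -/
def TTy.agemo : TTy := .union []

mutual
/-- The subtype relation on raw types. -/
inductive SubR : RawTy → RawTy → Prop
  | atom (a : ℕ) : SubR (.atom a) (.atom a)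
  | arrow {S S' T T'} : SubS S' S → SubT T T' → SubR (.arrow S T) (.arrow S' T')
/-- The subtype relation on subsidiary types.  Intersections are taken up to
    associativity and commutativity; `weaken` is the projection rule
    `S ≤ S' ⟹ S ∩ S'' ≤ S'` and `pair` the pairing rule. -/
inductive SubS : STy → STy → Prop
  | ofRaw {R R'} : SubR R R' → SubS (.inter [R]) (.inter [R'])
  | weaken {l l' : List RawTy} {S'} : SubS (.inter l) S' → l.Subperm l' →
      SubS (.inter l') S'
  | pair {S} {l' : List RawTy} : (∀ R' ∈ l', SubS S (.inter [R'])) →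
      SubS S (.inter l')
/-- The subtype relation on types.  `widen` is the injection rule
    `T ≤ T' ⟹ T ≤ T'' ∪ T'` and `copair` the copairing rule. -/
inductive SubT : TTy → TTy → Prop
  | ofS {S S'} : SubS S S' → SubT (.union [S]) (.union [S'])
  | widen {T} {l l' : List STy} : SubT T (.union l) → l.Subperm l' →
      SubT T (.union l')
  | copair {l : List STy} {T} : (∀ S ∈ l, SubT (.union [S]) T) →
      SubT (.union l) T
end

mutual
/-- The subtype system extended by the reflexivity and transitivity rules
    (both for subsidiary types and for types). -/
inductive SubR1 : RawTy → RawTy → Prop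
  | atom (a : ℕ) : SubR1 (.atom a) (.atom a)
  | arrow {S S' T T'} : SubS1 S' S → SubT1 T T' → SubR1 (.arrow S T) (.arrow S' T')
inductive SubS1 : STy → STy → Prop
  | ofRaw {R R'} : SubR1 R R' → SubS1 (.inter [R]) (.inter [R'])
  | weaken {l l' : List RawTy} {S'} : SubS1 (.inter l) S' → l.Subperm l' →
      SubS1 (.inter l') S'
  | pair {S} {l' : List RawTy} : (∀ R' ∈ l', SubS1 S (.inter [R'])) →
      SubS1 S (.inter l')
  | refl (S : STy) : SubS1 S S
  | trans {S S' S''} : SubS1 S S' → SubS1 S' S'' → SubS1 S S''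
inductive SubT1 : TTy → TTy → Prop
  | ofS {S S'} : SubS1 S S' → SubT1 (.union [S]) (.union [S'])
  | widen {T} {l l' : List STy} : SubT1 T (.union l) → l.Subperm l' →
      SubT1 T (.union l')
  | copair {l : List STy} {T} : (∀ S ∈ l, SubT1 (.union [S]) T) →
      SubT1 (.union l) T
  | refl (T : TTy) : SubT1 T T
  | trans {T T' T''} : SubT1 T T' → SubT1 T' T'' → SubT1 T T''
end

/-! Both pure relations are characterized structurally: `⋂ l ≤ ⋂ l'` iff every member of `l'`
lies above some member of `l`, and `⋃ l ≤ ⋃ l'` iff every member of `l` lies below some member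
of `l'`. Through this, reflexivity follows by induction on the type, and transitivity by
induction on the size of the middle type: the arrow case needs transitivity only for the domain
and codomain of the middle arrow. Admissibility is then an induction on derivations of the
extended system. -/

def STy.conjuncts : STy → List RawTy
  | .inter l => l

def TTy.disjuncts : TTy → List STy
  | .union l => l

theorem SubS.exists_subR : ∀ {S S' : STy}, SubS S S' →
    ∀ R' ∈ S'.conjuncts, ∃ R ∈ S.conjuncts, SubR R R'
  | _, _, .ofRaw h, _, hR' => ⟨_, List.mem_singleton_self _, List.eq_of_mem_singleton hR' ▸ h⟩
  | _, _, .weaken h hl, R', hR' =>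
    let ⟨R, hR, hRR'⟩ := h.exists_subR R' hR'
    ⟨R, hl.subset hR, hRR'⟩
  | _, _, .pair h, R', hR' => (h R' hR').exists_subR R' (List.mem_singleton_self _)

theorem SubT.exists_subS : ∀ {T T' : TTy}, SubT T T' →
    ∀ S ∈ T.disjuncts, ∃ S' ∈ T'.disjuncts, SubS S S'
  | _, _, .ofS h, _, hS => ⟨_, List.mem_singleton_self _, List.eq_of_mem_singleton hS ▸ h⟩
  | _, _, .widen h hl, S, hS =>
    let ⟨S', hS', hSS'⟩ := h.exists_subS S hS
    ⟨S', hl.subset hS', hSS'⟩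
  | _, _, .copair h, S, hS => (h S hS).exists_subS S (List.mem_singleton_self _)

theorem subS_inter_iff {l l' : List RawTy} :
    SubS (.inter l) (.inter l') ↔ ∀ R' ∈ l', ∃ R ∈ l, SubR R R' :=
  ⟨SubS.exists_subR, fun h => .pair fun R' hR' =>
    let ⟨_, hR, hRR'⟩ := h R' hR'
    .weaken (.ofRaw hRR') (List.singleton_subperm_iff.2 hR)⟩

theorem subT_union_iff {l l' : List STy} :
    SubT (.union l) (.union l') ↔ ∀ S ∈ l, ∃ S' ∈ l', SubS S S' :=
  ⟨SubT.exists_subS, fun h => .copair fun S hS =>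
    let ⟨_, hS', hSS'⟩ := h S hS
    .widen (.ofS hSS') (List.singleton_subperm_iff.2 hS')⟩

mutual
theorem SubR.refl : ∀ R : RawTy, SubR R R
  | .atom a => .atom a
  | .arrow S T => .arrow (SubS.refl S) (SubT.refl T)
theorem SubS.refl : ∀ S : STy, SubS S S
  | .inter l => subS_inter_iff.2 fun R hR => ⟨R, hR, SubR.refl R⟩
theorem SubT.refl : ∀ T : TTy, SubT T T
  | .union l => subT_union_iff.2 fun S hS => ⟨S, hS, SubS.refl S⟩
end

mutual
theorem SubR.trans {R R' R'' : RawTy} : SubR R R' → SubR R' R'' → SubR R R''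
  | .atom _, h => h
  | .arrow hS hT, .arrow hS' hT' => .arrow (hS'.trans hS) (hT.trans hT')
  termination_by sizeOf R'
theorem SubS.trans : ∀ {S S' S'' : STy}, SubS S S' → SubS S' S'' → SubS S S''
  | .inter _, .inter _, .inter _, h, h' => subS_inter_iff.2 fun R'' hR'' =>
    let ⟨R', hR', hR'R''⟩ := subS_inter_iff.1 h' R'' hR''
    let ⟨R, hR, hRR'⟩ := subS_inter_iff.1 h R' hR'
    have := List.sizeOf_lt_of_mem hR'
    ⟨R, hR, hRR'.trans hR'R''⟩
  termination_by _ S' _ _ _ => sizeOf S'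
theorem SubT.trans : ∀ {T T' T'' : TTy}, SubT T T' → SubT T' T'' → SubT T T''
  | .union _, .union _, .union _, h, h' => subT_union_iff.2 fun S hS =>
    let ⟨S', hS', hSS'⟩ := subT_union_iff.1 h S hS
    let ⟨S'', hS'', hS'S''⟩ := subT_union_iff.1 h' S' hS'
    have := List.sizeOf_lt_of_mem hS'
    ⟨S'', hS'', hSS'.trans hS'S''⟩
  termination_by _ T' _ _ _ => sizeOf T'
end

mutual
theorem SubR1.subR {R R' : RawTy} : SubR1 R R' → SubR R R'
  | .atom a => .atom a
  | .arrow hS hT => .arrow hS.subS hT.subT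
theorem SubS1.subS {S S' : STy} : SubS1 S S' → SubS S S'
  | .ofRaw h => .ofRaw h.subR
  | .weaken h hl => .weaken h.subS hl
  | .pair h => .pair fun R' hR' => (h R' hR').subS
  | .refl S => .refl S
  | .trans h h' => h.subS.trans h'.subS
theorem SubT1.subT {T T' : TTy} : SubT1 T T' → SubT T T'
  | .ofS h => .ofS h.subS
  | .widen h hl => .widen h.subT hl
  | .copair h => .copair fun S hS => (h S hS).subT
  | .refl T => .refl T
  | .trans h h' => h.subT.trans h'.subT
end

/-- Reflexivity and transitivity are admissible: any subtype
judgment derivable in the extended system is derivable in the pure system. -/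
theorem refl_trans_admissible :
    (∀ T T' : TTy, SubT1 T T' → SubT T T') ∧
    (∀ S S' : STy, SubS1 S S' → SubS S S') :=
  ⟨fun _ _ => SubT1.subT, fun _ _ => SubS1.subS⟩
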